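/- An element w of a finite Coxeter group satisfies ℓ_R(w) = ℓ(w) (reflection length equals Coxeter length) if and only if w is a standard parabolic Coxeter element, i.e., some (equivalently every) reduced expression for w uses each simple reflection at most once. -/

import Mathlib

/-!
If a reduced word `a sᵢ b sᵢ c` for `w` repeats a letter, then `sᵢ b sᵢ` is a product of `|b|`
conjugates of simple reflections, so `w` is a product of `ℓ(w) - 2` reflections.

Conversely let `w = sᵢ₁ ⋯ sᵢₖ` with distinct letters and `w = t₁ ⋯ tᵣ` with reflections `tⱼ`.
In the geometric representation each `tⱼ` fixes a hyperplane, so on `U = span {αᵢ₁, …, αᵢₖ}` the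
fixed vectors of `w` satisfy at most `r` linear conditions. But a vector of `U` fixed by `w` is
fixed by every `sᵢₗ` (the letters are distinct), hence orthogonal to `U` for a `W`-invariant
positive definite form, which exists since `W` is finite. So `k = dim U ≤ r`.
-/

open Module Real Polynomial.Chebyshev

lemma Polynomial.Chebyshev.S_eval_two_mul_cos_two_mul_pi_div {m : ℕ} (hm : 2 ≤ m) :
    (S ℝ m).eval (2 * cos (2 * (π / m))) + (S ℝ (m - 1)).eval (2 * cos (2 * (π / m))) = 1 ∧
      (S ℝ (m - 1)).eval (2 * cos (2 * (π / m))) * cos (π / m) = 0 := by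
  obtain rfl | hm3 := hm.eq_or_lt
  · norm_num [S_two, S_one, mul_div_cancel₀]
  set θ := 2 * (π / m)
  have hmθ : (m : ℝ) * θ = 2 * π := by simp only [θ]; field_simp
  have hsin : sin θ ≠ 0 := by
    refine (sin_pos_of_pos_of_lt_pi (by positivity) ?_).ne'
    have : (3 : ℝ) ≤ m := by exact_mod_cast hm3
    calc θ = 2 * π / m := by ring
      _ < π := by rw [div_lt_iff₀ (by positivity)]; nlinarith [pi_pos]
  have hS : ∀ n : ℤ, (S ℝ n).eval (2 * cos θ) = sin ((n + 1) * θ) / sin θ := fun n ↦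
    eq_div_of_mul_eq hsin (S_two_mul_real_cos θ n)
  have h₁ : (S ℝ (m - 1)).eval (2 * cos θ) = 0 := by
    rw [hS]; push_cast; rw [sub_add_cancel, hmθ, sin_two_pi, zero_div]
  refine ⟨?_, by rw [h₁, zero_mul]⟩
  rw [h₁, add_zero, hS]; push_cast
  rw [add_mul, one_mul, hmθ, add_comm, sin_add_two_pi, div_self hsin]

lemma Module.Dual.exists_sub_smul_sub_smul_mem_ker {K V : Type*} [Field K] [AddCommGroup V]
    [Module K V] {f g : Dual K V} {x y : V} (hdet : f x * g y - f y * g x ≠ 0) (v : V) :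
    ∃ a b : K, f (v - a • x - b • y) = 0 ∧ g (v - a • x - b • y) = 0 := by
  refine ⟨(f v * g y - f y * g v) / (f x * g y - f y * g x),
    (f x * g v - g x * f v) / (f x * g y - f y * g x), ?_, ?_⟩ <;>
  simp only [map_sub, map_smul, smul_eq_mul, div_eq_mul_inv]
  · linear_combination -f v * mul_inv_cancel₀ hdet
  · linear_combination -g v * mul_inv_cancel₀ hdet

lemma Submodule.finrank_le_length_of_forall_eq_zero {K V : Type*} [Field K] [AddCommGroup V]
    [Module K V] (U : Submodule K V) (φs : List (Dual K V))
    (h : ∀ u ∈ U, (∀ φ ∈ φs, φ u = 0) → u = 0) : finrank K U ≤ φs.length := by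
  let Φ : U →ₗ[K] Fin φs.length → K := LinearMap.pi fun n ↦ φs[n] ∘ₗ U.subtype
  have hΦ : Function.Injective Φ := by
    refine (injective_iff_map_eq_zero Φ).mpr fun u hu ↦ Subtype.ext (h u u.2 fun φ hφ ↦ ?_)
    obtain ⟨n, rfl⟩ := List.mem_iff_get.mp hφ
    exact congrFun hu n
  simpa using LinearMap.finrank_le_finrank_of_injective hΦ

lemma Finsupp.finrank_supported_toFinset {B : Type*} [DecidableEq B] {ω : List B}
    (hω : ω.Nodup) : finrank ℝ (supported ℝ ℝ (ω.toFinset : Set B)) = ω.length := by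
  rw [(supportedEquivFinsupp _).finrank_eq, finrank_finsupp_self,
    ← List.toFinset_card_of_nodup hω]
  exact Fintype.card_coe _

lemma List.exists_eq_append_cons_append_cons_of_not_nodup {α : Type*} {l : List α}
    (h : ¬ l.Nodup) : ∃ a i b c, l = a ++ i :: (b ++ i :: c) := by
  obtain ⟨i, hi⟩ := by simpa [List.nodup_iff_sublist] using h
  obtain ⟨r₁, r₂, rfl, h₁, h₂⟩ := List.cons_sublist_iff.mp hi
  obtain ⟨a, b, rfl⟩ := List.append_of_mem h₁
  obtain ⟨b', c, rfl⟩ := List.append_of_mem (List.singleton_sublist.mp h₂)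
  exact ⟨a, i, b ++ b', c, by simp⟩

namespace Finsupp

variable {B : Type*}

noncomputable def dotForm : LinearMap.BilinForm ℝ (B →₀ ℝ) :=
  linearCombination ℝ lapply

lemma dotForm_self (v : B →₀ ℝ) : dotForm v v = ∑ b ∈ v.support, v b ^ 2 := by
  simp [dotForm, linearCombination_apply, sum, sq]

lemma dotForm_self_nonneg (v : B →₀ ℝ) : 0 ≤ dotForm v v := by
  rw [dotForm_self]
  positivity

lemma eq_zero_of_dotForm_self_eq_zero {v : B →₀ ℝ} (h : dotForm v v = 0) : v = 0 := by
  rw [dotForm_self, Finset.sum_eq_zero_iff_of_nonneg fun _ _ ↦ sq_nonneg _] at h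
  ext b
  by_contra hb
  exact hb (pow_eq_zero_iff two_ne_zero |>.mp (h b (mem_support_iff.mpr hb)))

end Finsupp

namespace CoxeterMatrix

variable {B : Type*} (M : CoxeterMatrix B)

/-- The coroot `v ↦ 2 B(αᵢ, v)` of the geometric representation, where
`B(αᵢ, αⱼ) = -cos (π / mᵢⱼ)`; `π / 0 = 0` gives the right value for `mᵢⱼ = ∞`. -/
noncomputable def coroot (i : B) : Dual ℝ (B →₀ ℝ) :=
  Finsupp.linearCombination ℝ fun j ↦ -2 * cos (π / M i j)

lemma coroot_single (i j : B) : M.coroot i (Finsupp.single j 1) = -2 * cos (π / M i j) := by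
  simp [coroot]

lemma coroot_single_self (i : B) : M.coroot i (Finsupp.single i 1) = 2 := by
  simp [coroot_single]

lemma coroot_single_comm (i j : B) :
    M.coroot i (Finsupp.single j 1) = M.coroot j (Finsupp.single i 1) := by
  rw [coroot_single, coroot_single, M.isSymm.apply j i]

noncomputable def geomReflection (i : B) : (B →₀ ℝ) ≃ₗ[ℝ] (B →₀ ℝ) :=
  reflection (M.coroot_single_self i)

lemma geomReflection_apply (i : B) (v : B →₀ ℝ) :
    M.geomReflection i v = v - M.coroot i v • Finsupp.single i 1 :=
  reflection_apply _ _

lemma geomReflection_mul_pow_apply_single_left {i j : B} (hm : 2 ≤ M i j) :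
    ((M.geomReflection i * M.geomReflection j) ^ M i j) (Finsupp.single i 1) =
      Finsupp.single i 1 := by
  rw [geomReflection, geomReflection, reflection_mul_reflection_pow_apply_self,
    coroot_single_comm M j i, coroot_single]
  obtain ⟨h₁, h₂⟩ := S_eval_two_mul_cos_two_mul_pi_div hm
  have ht : -2 * cos (π / M i j) * (-2 * cos (π / M i j)) - 2 = 2 * cos (2 * (π / M i j)) := by
    rw [cos_two_mul]; ring
  rw [ht, h₁, one_smul, add_eq_left, smul_eq_zero]
  left
  linear_combination 2 * h₂

lemma geomReflection_mul_pow {i j : B} (hm : 2 ≤ M i j) :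
    (M.geomReflection i * M.geomReflection j) ^ M i j = 1 := by
  have hαj : ((M.geomReflection i * M.geomReflection j) ^ M i j) (Finsupp.single j 1) =
      Finsupp.single j 1 := by
    have h := M.geomReflection_mul_pow_apply_single_left (M.isSymm.apply i j ▸ hm)
    rw [M.isSymm.apply i j] at h
    have hinv : M.geomReflection i * M.geomReflection j =
        (M.geomReflection j * M.geomReflection i)⁻¹ := by
      simp [geomReflection]
    rw [hinv, inv_pow]
    exact (LinearEquiv.symm_apply_eq _).mpr h.symm
  have hdet : M.coroot i (Finsupp.single i 1) * M.coroot j (Finsupp.single j 1) -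
      M.coroot i (Finsupp.single j 1) * M.coroot j (Finsupp.single i 1) ≠ 0 := by
    rw [coroot_single_self, coroot_single_self, coroot_single, coroot_single, M.isSymm.apply i j]
    have : 0 < sin (π / M i j) :=
      sin_pos_of_pos_of_lt_pi (by positivity) (div_lt_self pi_pos (by exact_mod_cast hm))
    nlinarith [sin_sq_add_cos_sq (π / M i j)]
  -- `v` is a combination of `αᵢ` and `αⱼ` plus a vector fixed by both reflections.
  ext v : 1
  obtain ⟨a, b, hfz, hgz⟩ := Dual.exists_sub_smul_sub_smul_mem_ker hdet v
  set z := v - a • Finsupp.single i (1 : ℝ) - b • Finsupp.single j 1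
  have hz : ((M.geomReflection i * M.geomReflection j) ^ M i j) z = z := by
    rw [LinearEquiv.pow_apply]
    refine Function.IsFixedPt.iterate ?_ _
    simp [Function.IsFixedPt, geomReflection_apply, hfz, hgz]
  rw [show v = a • Finsupp.single i 1 + b • Finsupp.single j 1 + z by module, map_add, map_add,
    map_smul, map_smul, geomReflection_mul_pow_apply_single_left M hm, hαj, hz]
  rfl

lemma isLiftable_geomReflection : M.IsLiftable M.geomReflection := by
  intro i j
  obtain rfl | hij := eq_or_ne i j
  · rw [M.diagonal, pow_one]
    simpa [geomReflection] using mul_inv_cancel (M.geomReflection i)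
  obtain h0 | hm := (M i j).eq_zero_or_pos
  · rw [h0, pow_zero]
  · exact M.geomReflection_mul_pow (by have := M.off_diagonal i j hij; omega)

end CoxeterMatrix

namespace CoxeterSystem

variable {B W : Type*} [Group W] {M : CoxeterMatrix B} (cs : CoxeterSystem M W)

noncomputable def geomRep : W →* (B →₀ ℝ) ≃ₗ[ℝ] (B →₀ ℝ) :=
  cs.lift ⟨M.geomReflection, M.isLiftable_geomReflection⟩

lemma geomRep_simple (i : B) : cs.geomRep (cs.simple i) = M.geomReflection i :=
  cs.lift_apply_simple _ i

lemma IsReflection.exists_dual_forall_geomRep_apply_eq_self {t : W} (ht : cs.IsReflection t) :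
    ∃ φ : Dual ℝ (B →₀ ℝ), ∀ v, φ v = 0 → cs.geomRep t v = v := by
  obtain ⟨x, i, rfl⟩ := ht
  refine ⟨M.coroot i ∘ₗ (cs.geomRep x⁻¹).toLinearMap, fun v hv ↦ ?_⟩
  simp_all [geomRep_simple, M.geomReflection_apply]

lemma exists_duals_forall_geomRep_prod_apply_eq_self {T : List W}
    (hT : ∀ t ∈ T, cs.IsReflection t) : ∃ φs : List (Dual ℝ (B →₀ ℝ)), φs.length = T.length ∧
      ∀ v, (∀ φ ∈ φs, φ v = 0) → cs.geomRep T.prod v = v := by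
  induction T with
  | nil => exact ⟨[], rfl, by simp⟩
  | cons t T ih =>
    obtain ⟨φ, hφ⟩ := (hT t List.mem_cons_self).exists_dual_forall_geomRep_apply_eq_self
    obtain ⟨φs, hlen, hφs⟩ := ih fun t' ht' ↦ hT t' (List.mem_cons_of_mem t ht')
    refine ⟨φ :: φs, by simp [hlen], fun v hv ↦ ?_⟩
    rw [List.prod_cons, map_mul, LinearEquiv.mul_apply,
      hφs v fun ψ hψ ↦ hv ψ (List.mem_cons_of_mem φ hψ), hφ v (hv φ List.mem_cons_self)]

section Finite

variable [Fintype W]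

noncomputable def invariantForm : LinearMap.BilinForm ℝ (B →₀ ℝ) :=
  ∑ x : W, Finsupp.dotForm.compl₁₂ (cs.geomRep x).toLinearMap (cs.geomRep x).toLinearMap

lemma invariantForm_apply (u v : B →₀ ℝ) :
    cs.invariantForm u v = ∑ x : W, Finsupp.dotForm (cs.geomRep x u) (cs.geomRep x v) := by
  simp [invariantForm, LinearMap.sum_apply]

lemma invariantForm_geomRep (y : W) (u v : B →₀ ℝ) :
    cs.invariantForm (cs.geomRep y u) (cs.geomRep y v) = cs.invariantForm u v := by
  simp only [invariantForm_apply, ← LinearEquiv.mul_apply, ← map_mul]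
  exact Fintype.sum_equiv (Equiv.mulRight y) _ _ fun _ ↦ rfl

lemma eq_zero_of_invariantForm_self_eq_zero {v : B →₀ ℝ} (h : cs.invariantForm v v = 0) :
    v = 0 := by
  rw [invariantForm_apply, Finset.sum_eq_zero_iff_of_nonneg
    fun _ _ ↦ Finsupp.dotForm_self_nonneg _] at h
  simpa using Finsupp.eq_zero_of_dotForm_self_eq_zero (h 1 (Finset.mem_univ 1))

lemma invariantForm_single_eq_zero {i : B} {v : B →₀ ℝ} (hv : M.coroot i v = 0) :
    cs.invariantForm (Finsupp.single i 1) v = 0 := by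
  have h := cs.invariantForm_geomRep (cs.simple i) (Finsupp.single i 1) v
  rw [geomRep_simple, M.geomReflection_apply, M.geomReflection_apply, hv, M.coroot_single_self,
    zero_smul, sub_zero, two_smul, sub_add_cancel_left, map_neg, LinearMap.neg_apply] at h
  linarith

end Finite

section Supported

variable [DecidableEq B]

lemma geomRep_wordProd_apply_sub_mem_supported (ω : List B) (v : B →₀ ℝ) :
    cs.geomRep (cs.wordProd ω) v - v ∈ Finsupp.supported ℝ ℝ (ω.toFinset : Set B) := by
  induction ω with
  | nil => simp
  | cons i ω ih =>
    have hsub : Finsupp.supported ℝ ℝ (ω.toFinset : Set B) ≤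
        Finsupp.supported ℝ ℝ ((i :: ω).toFinset : Set B) :=
      Finsupp.supported_mono (by simp [Set.subset_insert])
    have hi : Finsupp.single i 1 ∈ Finsupp.supported ℝ ℝ ((i :: ω).toFinset : Set B) :=
      Finsupp.single_mem_supported ℝ 1 (by simp)
    rw [wordProd_cons, map_mul, LinearEquiv.mul_apply, geomRep_simple, M.geomReflection_apply,
      sub_right_comm]
    exact sub_mem (hsub ih) (Submodule.smul_mem _ _ hi)

lemma coroot_eq_zero_of_geomRep_wordProd_apply_eq_self {ω : List B} (hω : ω.Nodup)
    {v : B →₀ ℝ} (hv : cs.geomRep (cs.wordProd ω) v = v) : ∀ i ∈ ω, M.coroot i v = 0 := by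
  induction ω with
  | nil => simp
  | cons i ω ih =>
    obtain ⟨hiω, hω⟩ := List.nodup_cons.mp hω
    set X := cs.geomRep (cs.wordProd ω) v
    have hX : X - M.coroot i X • Finsupp.single i 1 = v := by
      rwa [wordProd_cons, map_mul, LinearEquiv.mul_apply, geomRep_simple,
        M.geomReflection_apply] at hv
    -- `X - v` is a multiple of `αᵢ` supported away from `i`.
    have hXi : M.coroot i X = 0 := by
      have h : (X - v) i = 0 := (Finsupp.mem_supported' _ _).mp
        (cs.geomRep_wordProd_apply_sub_mem_supported ω v) i (by simpa using hiω)
      rw [← hX] at h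
      simpa using h
    rw [hXi, zero_smul, sub_zero] at hX
    rintro j (_ | ⟨_, hj⟩)
    · rwa [← hX]
    · exact ih hω hX j hj

end Supported

theorem length_le_length_of_prod_eq_wordProd [Finite W] {ω : List B} (hω : ω.Nodup)
    {T : List W} (hT : ∀ t ∈ T, cs.IsReflection t) (hprod : T.prod = cs.wordProd ω) :
    ω.length ≤ T.length := by
  classical
  have := Fintype.ofFinite W
  obtain ⟨φs, hlen, hfix⟩ := cs.exists_duals_forall_geomRep_prod_apply_eq_self hT
  rw [← Finsupp.finrank_supported_toFinset hω, ← hlen]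
  refine Submodule.finrank_le_length_of_forall_eq_zero _ φs fun u hu hφs ↦ ?_
  have hu_fix : cs.geomRep (cs.wordProd ω) u = u := hprod ▸ hfix u hφs
  have hperp : Finsupp.supported ℝ ℝ (ω.toFinset : Set B) ≤
      LinearMap.ker (cs.invariantForm.flip u) := by
    rw [Finsupp.supported_eq_span_single, Submodule.span_le]
    rintro _ ⟨i, hi, rfl⟩
    exact cs.invariantForm_single_eq_zero
      (cs.coroot_eq_zero_of_geomRep_wordProd_apply_eq_self hω hu_fix i (by simpa using hi))
  exact cs.eq_zero_of_invariantForm_self_eq_zero (hperp hu)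

lemma exists_reflections_prod_eq_wordProd_of_not_nodup {ω : List B} (hω : ¬ ω.Nodup) :
    ∃ T : List W, (∀ t ∈ T, cs.IsReflection t) ∧ T.length + 2 = ω.length ∧
      T.prod = cs.wordProd ω := by
  obtain ⟨a, i, b, c, rfl⟩ := List.exists_eq_append_cons_append_cons_of_not_nodup hω
  refine ⟨a.map cs.simple ++ (b.map cs.simple).map (MulAut.conj (cs.simple i)) ++
    c.map cs.simple, ?_, by simp; omega, ?_⟩
  · simp only [List.mem_append, List.mem_map]
    rintro _ ((⟨j, -, rfl⟩ | ⟨_, ⟨j, -, rfl⟩, rfl⟩) | ⟨j, -, rfl⟩)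
    · exact cs.isReflection_simple j
    · exact (cs.isReflection_simple j).conj _
    · exact cs.isReflection_simple j
  · simp only [List.prod_append, ← map_list_prod, MulAut.conj_apply, wordProd_append,
      wordProd_cons, inv_simple, mul_assoc]
    rfl

end CoxeterSystem

theorem reflection_length_eq_length_iff {B W : Type*} [Group W] [Finite W]
    {M : CoxeterMatrix B} (cs : CoxeterSystem M W) (w : W) :
    sInf {r : ℕ | ∃ l : List W, (∀ t ∈ l, cs.IsReflection t) ∧ l.length = r ∧
        l.prod = w} = cs.length w ↔
      ∀ l : List B, cs.wordProd l = w → l.length = cs.length w → l.Nodup := by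
  obtain ⟨ω, hω, rfl⟩ := cs.exists_isReduced w
  set S := {r : ℕ | ∃ l : List W, (∀ t ∈ l, cs.IsReflection t) ∧ l.length = r ∧
    l.prod = cs.wordProd ω}
  have hω_mem : ω.length ∈ S :=
    ⟨ω.map cs.simple, by simp [cs.isReflection_simple], by simp, rfl⟩
  rw [hω.eq]
  constructor
  · intro h l hl hlen
    by_contra hnd
    obtain ⟨T, hT, hTlen, hTprod⟩ := cs.exists_reflections_prod_eq_wordProd_of_not_nodup hnd
    have := Nat.sInf_le (s := S) ⟨T, hT, rfl, hTprod.trans hl⟩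
    omega
  · intro hnd
    refine (Nat.sInf_le hω_mem).antisymm (le_csInf ⟨_, hω_mem⟩ ?_)
    rintro _ ⟨T, hT, rfl, hTprod⟩
    exact cs.length_le_length_of_prod_eq_wordProd (hnd ω rfl rfl) hT hTprod
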